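/- Let 𝒢 be a linear r-graph whose bowtie graph B contains a path on p ≥ k² vertices. Then 𝒢 contains k hyperedges spanning at most (r-2)k + 3 vertices. -/

import Mathlib

open scoped Classical

/-- A hypergraph (finite set of hyperedges) is linear if any two distinct
hyperedges share at most one vertex. -/
def Linear {V : Type*} [DecidableEq V] (𝒢 : Finset (Finset V)) : Prop :=
  ∀ S ∈ 𝒢, ∀ T ∈ 𝒢, S ≠ T → (S ∩ T).card ≤ 1

/-- A hypergraph is `r`-uniform if every hyperedge has exactly `r` vertices. -/
def Uniform {V : Type*} (r : ℕ) (𝒢 : Finset (Finset V)) : Prop :=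
  ∀ S ∈ 𝒢, S.card = r

/-- A bowtie of `𝒢` is an unordered pair `{S, T}` of distinct hyperedges of `𝒢`
intersecting in exactly one vertex. -/
def IsBowtie {V : Type*} [DecidableEq V] (𝒢 : Finset (Finset V))
    (b : Finset (Finset V)) : Prop :=
  ∃ S T : Finset V, S ∈ 𝒢 ∧ T ∈ 𝒢 ∧ S ≠ T ∧ (S ∩ T).card = 1 ∧ b = {S, T}

/-- The bowtie graph `B(𝒢)`: vertices are the bowties of `𝒢`; bowties
`b₁ = {S₁, T}` and `b₂ = {S₂, T}` are adjacent iff `|S₁ ∩ S₂| = 1` and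
`S₁ ∩ S₂ ∩ T = ∅`. -/
def bowtieGraph {V : Type*} [DecidableEq V] (𝒢 : Finset (Finset V)) :
    SimpleGraph {b : Finset (Finset V) // IsBowtie 𝒢 b} where
  Adj b₁ b₂ := b₁ ≠ b₂ ∧ ∃ S₁ S₂ T : Finset V,
      (b₁ : Finset (Finset V)) = {S₁, T} ∧ (b₂ : Finset (Finset V)) = {S₂, T} ∧
      (S₁ ∩ S₂).card = 1 ∧ S₁ ∩ S₂ ∩ T = ∅
  symm := ⟨by
    rintro b₁ b₂ ⟨hne, S₁, S₂, T, h₁, h₂, hc, he⟩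
    exact ⟨hne.symm, S₂, S₁, T, h₂, h₁, by rwa [Finset.inter_comm],
      by rwa [Finset.inter_comm S₂ S₁]⟩⟩
  loopless := ⟨by rintro b ⟨hne, -⟩; exact hne rfl⟩

/-!
Walk along the path and keep the union of the bowties seen so far. A new bowtie `{S₁, T}` is
adjacent to one `{S₂, T}` already seen, so it contributes at most the hyperedge `S₁`, which meets
the vertices already spanned in two distinct points (one in `S₂`, one in `T`) and so adds at most
`r - 2` of them. Starting from a bowtie (`2` hyperedges on `2r - 1` vertices), every family reached
along the way spans at most `(r - 2) · #𝒦 + 3` vertices, and the family grows by at most one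
hyperedge at a time. The path has `p ≥ k²` distinct bowties, each a pair of hyperedges of the final
family, so that family has at least `k` hyperedges and some intermediate one has exactly `k`.
-/

open Finset

section

variable {V : Type*} [DecidableEq V]

/-- `𝒦` is an `((r - 2)|𝒦| + 3, |𝒦|)`-configuration. -/
def IsSparse (r : ℕ) (𝒦 : Finset (Finset V)) : Prop :=
  #(𝒦.sup id) ≤ (r - 2) * #𝒦 + 3

lemma card_union_le_of_two_le_card_inter {A B : Finset V} (h : 2 ≤ #(B ∩ A)) :
    #(A ∪ B) ≤ #A + (#B - 2) := by
  have := card_union_add_card_inter A B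
  rw [inter_comm] at h
  omega

lemma IsSparse.insert {r : ℕ} {𝒦 : Finset (Finset V)} {S : Finset V} (h𝒦 : IsSparse r 𝒦)
    (hS : #S = r) (hS𝒦 : S ∉ 𝒦) (hmeet : 2 ≤ #(S ∩ 𝒦.sup id)) : IsSparse r (insert S 𝒦) := by
  have hunion := card_union_le_of_two_le_card_inter (A := 𝒦.sup id) hmeet
  unfold IsSparse at h𝒦 ⊢
  rw [sup_insert, card_insert_of_notMem hS𝒦, id, sup_eq_union, union_comm, mul_add_one]
  omega

lemma isSparse_of_card_le_one {r : ℕ} {𝒦 : Finset (Finset V)} (hunif : Uniform r 𝒦)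
    (h𝒦 : #𝒦 ≤ 1) : IsSparse r 𝒦 := by
  rcases Nat.le_one_iff_eq_zero_or_eq_one.mp h𝒦 with h | h
  · simp [IsSparse, card_eq_zero.mp h]
  · obtain ⟨S, rfl⟩ := card_eq_one.mp h
    simp only [IsSparse, sup_singleton, id, hunif S (mem_singleton_self S), card_singleton]
    omega

namespace IsBowtie

variable {𝒢 b : Finset (Finset V)}

lemma subset (hb : IsBowtie 𝒢 b) : b ⊆ 𝒢 := by
  obtain ⟨S, T, hS, hT, -, -, rfl⟩ := hb
  exact insert_subset hS (singleton_subset_iff.mpr hT)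

lemma card_eq_two (hb : IsBowtie 𝒢 b) : #b = 2 := by
  obtain ⟨S, T, -, -, hST, -, rfl⟩ := hb
  exact card_pair hST

lemma card_inter_eq_one (hb : IsBowtie 𝒢 b) {X Y : Finset V} (hX : X ∈ b) (hY : Y ∈ b)
    (hXY : X ≠ Y) : #(X ∩ Y) = 1 := by
  obtain ⟨S, T, -, -, -, hST, rfl⟩ := hb
  simp only [mem_insert, mem_singleton] at hX hY
  rcases hX with rfl | rfl <;> rcases hY with rfl | rfl <;> first
    | exact absurd rfl hXY | exact hST | rwa [inter_comm]

lemma isSparse {r : ℕ} (hunif : Uniform r 𝒢) (hb : IsBowtie 𝒢 b) : IsSparse r b := by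
  obtain ⟨S, T, hS, hT, hST, hcap, rfl⟩ := hb
  have := card_union_add_card_inter S T
  simp only [IsSparse, sup_insert, sup_singleton, id, sup_eq_union, card_pair hST,
    hunif S hS, hunif T hT] at this ⊢
  omega

end IsBowtie

namespace bowtieGraph

variable {𝒢 : Finset (Finset V)}

lemma exists_two_le_card_inter_sup_of_adj {b₁ b₂ : {b // IsBowtie 𝒢 b}}
    (hadj : (bowtieGraph 𝒢).Adj b₁ b₂) {𝒦 : Finset (Finset V)} (h𝒦 : b₂.val ⊆ 𝒦) :
    ∃ S ∈ b₁.val, b₁.val ⊆ insert S 𝒦 ∧ 2 ≤ #(S ∩ 𝒦.sup id) := by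
  obtain ⟨-, S₁, S₂, T, h₁, h₂, hS₁S₂, hdisj⟩ := hadj
  have hS₂ : S₂ ∈ 𝒦 := h𝒦 (by simp [h₂])
  have hT : T ∈ 𝒦 := h𝒦 (by simp [h₂])
  have hS₁T : S₁ ≠ T := by
    rintro rfl
    simpa [h₁] using b₁.2.card_eq_two
  have hS₁Tcap := b₁.2.card_inter_eq_one (by simp [h₁]) (by simp [h₁]) hS₁T
  obtain ⟨x, hx⟩ := card_eq_one.mp hS₁S₂
  obtain ⟨y, hy⟩ := card_eq_one.mp hS₁Tcap
  have hxS : x ∈ S₁ ∩ S₂ := hx ▸ mem_singleton_self x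
  have hyS : y ∈ S₁ ∩ T := hy ▸ mem_singleton_self y
  have hxy : x ≠ y := by
    rintro rfl
    have : x ∈ S₁ ∩ S₂ ∩ T := mem_inter.mpr ⟨hxS, (mem_inter.mp hyS).2⟩
    simp [hdisj] at this
  refine ⟨S₁, by simp [h₁], by simp [h₁, hT], ?_⟩
  calc 2 = #{x, y} := (card_pair hxy).symm
    _ ≤ #(S₁ ∩ 𝒦.sup id) := card_le_card <| insert_subset
        (mem_inter.mpr ⟨(mem_inter.mp hxS).1, mem_sup.mpr ⟨S₂, hS₂, (mem_inter.mp hxS).2⟩⟩)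
        (singleton_subset_iff.mpr
          (mem_inter.mpr ⟨(mem_inter.mp hyS).1, mem_sup.mpr ⟨T, hT, (mem_inter.mp hyS).2⟩⟩))

def hyperedges {a b : {b // IsBowtie 𝒢 b}} (w : (bowtieGraph 𝒢).Walk a b) :
    Finset (Finset V) :=
  w.support.toFinset.biUnion Subtype.val

variable {a b : {b // IsBowtie 𝒢 b}}

@[simp]
lemma hyperedges_nil : hyperedges (SimpleGraph.Walk.nil : (bowtieGraph 𝒢).Walk a a) = a.val := by
  simp [hyperedges]

@[simp]
lemma hyperedges_cons {c : {b // IsBowtie 𝒢 b}} (h : (bowtieGraph 𝒢).Adj a c)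
    (w : (bowtieGraph 𝒢).Walk c b) :
    hyperedges (SimpleGraph.Walk.cons h w) = a.val ∪ hyperedges w := by
  simp [hyperedges]

lemma hyperedges_subset (w : (bowtieGraph 𝒢).Walk a b) : hyperedges w ⊆ 𝒢 :=
  biUnion_subset.mpr fun c _ ↦ c.2.subset

lemma start_subset_hyperedges (w : (bowtieGraph 𝒢).Walk a b) : a.val ⊆ hyperedges w :=
  subset_biUnion_of_mem Subtype.val (List.mem_toFinset.mpr w.start_mem_support)

lemma exists_isSparse_subset_hyperedges {r : ℕ} (hunif : Uniform r 𝒢)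
    (w : (bowtieGraph 𝒢).Walk a b) {m : ℕ} (hm : m ≤ #(hyperedges w)) :
    ∃ 𝒦 ⊆ hyperedges w, #𝒦 = m ∧ IsSparse r 𝒦 := by
  induction w generalizing m with
  | @nil u =>
    rw [hyperedges_nil] at hm ⊢
    rcases le_or_gt m 1 with hm1 | hm1
    · obtain ⟨𝒦, h𝒦, rfl⟩ := exists_subset_card_eq hm
      exact ⟨𝒦, h𝒦, rfl, isSparse_of_card_le_one (fun S hS ↦ hunif S (u.2.subset (h𝒦 hS))) hm1⟩
    · refine ⟨_, Subset.rfl, ?_, u.2.isSparse hunif⟩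
      have := u.2.card_eq_two
      omega
  | @cons u v _ hadj w ih =>
    obtain ⟨S, hSa, haS, hmeet⟩ :=
      exists_two_le_card_inter_sup_of_adj hadj (start_subset_hyperedges w)
    have hgrow : hyperedges (.cons hadj w) ⊆ insert S (hyperedges w) := by
      rw [hyperedges_cons]
      exact union_subset haS (subset_insert _ _)
    rcases le_or_gt m #(hyperedges w) with hmw | hmw
    · obtain ⟨𝒦, h𝒦, h𝒦m, hsparse⟩ := ih hmw
      exact ⟨𝒦, h𝒦.trans (by simp), h𝒦m, hsparse⟩
    have hSw : S ∉ hyperedges w := by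
      intro hSw
      have := card_le_card hgrow
      rw [insert_eq_of_mem hSw] at this
      omega
    have hm' : m = #(hyperedges w) + 1 := by
      have := card_le_card hgrow
      rw [card_insert_of_notMem hSw] at this
      omega
    obtain ⟨𝒦, h𝒦, h𝒦card, hsparse⟩ := ih le_rfl
    obtain rfl := eq_of_subset_of_card_le h𝒦 h𝒦card.ge
    refine ⟨insert S (hyperedges w), insert_subset (by simp [hSa]) (by simp), ?_,
      hsparse.insert (hunif S (u.2.subset hSa)) hSw hmeet⟩
    rw [card_insert_of_notMem hSw, hm']

lemma _root_.SimpleGraph.Walk.IsPath.length_add_one_le_choose_card_hyperedges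
    {w : (bowtieGraph 𝒢).Walk a b} (hw : w.IsPath) :
    w.length + 1 ≤ (#(hyperedges w)).choose 2 := by
  rw [← card_powersetCard, ← w.length_support, ← List.toFinset_card_of_nodup hw.support_nodup]
  refine card_le_card_of_injOn Subtype.val (fun c hc ↦ ?_) Subtype.val_injective.injOn
  exact mem_powersetCard.mpr
    ⟨subset_biUnion_of_mem Subtype.val hc, c.2.card_eq_two⟩

end bowtieGraph

end

theorem stmt_15_general {V : Type*} [DecidableEq V] (r k p : ℕ)
    (𝒢 : Finset (Finset V)) (hunif : Uniform r 𝒢)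
    (hp : k ^ 2 ≤ p)
    (hpath : ∃ (a b : {b : Finset (Finset V) // IsBowtie 𝒢 b})
      (w : (bowtieGraph 𝒢).Walk a b), w.IsPath ∧ w.length + 1 = p) :
    ∃ 𝒦 : Finset (Finset V), 𝒦 ⊆ 𝒢 ∧ 𝒦.card = k ∧
      (𝒦.sup id).card ≤ (r - 2) * k + 3 := by
  obtain ⟨a, b, w, hw, rfl⟩ := hpath
  have hk : k ≤ #(bowtieGraph.hyperedges w) := by
    refine (Nat.pow_le_pow_iff_left two_ne_zero).mp (hp.trans ?_)
    exact hw.length_add_one_le_choose_card_hyperedges.trans (Nat.choose_le_pow _ _)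
  obtain ⟨𝒦, h𝒦, rfl, hsparse⟩ := bowtieGraph.exists_isSparse_subset_hyperedges hunif w hk
  exact ⟨𝒦, h𝒦.trans (bowtieGraph.hyperedges_subset w), rfl, hsparse⟩

/-- If the bowtie graph of a linear `r`-graph `𝒢` contains a path on `p ≥ k²`
vertices, then `𝒢` contains `k` hyperedges spanning at most `(r-2)k + 3` vertices. -/
theorem stmt_15 {V : Type*} [DecidableEq V] (r k p : ℕ) (hr : 3 ≤ r)
    (𝒢 : Finset (Finset V)) (hlin : Linear 𝒢) (hunif : Uniform r 𝒢)
    (hp : k ^ 2 ≤ p)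
    (hpath : ∃ (a b : {b : Finset (Finset V) // IsBowtie 𝒢 b})
      (w : (bowtieGraph 𝒢).Walk a b), w.IsPath ∧ w.length + 1 = p) :
    ∃ 𝒦 : Finset (Finset V), 𝒦 ⊆ 𝒢 ∧ 𝒦.card = k ∧
      (𝒦.sup id).card ≤ (r - 2) * k + 3 :=
  stmt_15_general r k p 𝒢 hunif hp hpath
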